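/- Let C ⊆ ℝⁿ be a nonempty closed convex set, v ∈ ri(C), and let w be close enough to v that the projection of w onto C equals its projection onto aff(C). Let L be the subspace parallel to aff(C) and suppose S_I := {q : q_I = 0} ⊆ L for an index set I ⊆ [n]. Then writing p := Π_C(w), we have wᵢ = pᵢ for all i ∉ I, and hence dist(w, C) = ‖w_I − p_I‖ ≥ dist(Π_I w, Π_I C), where Π_I is the coordinate projection onto the components in I. -/
import Mathlib


open scoped RealInnerProductSpace

/-- Coordinate projection onto the components in `I`, as a map to a Euclidean space. -/
noncomputable def coordProj {n : ℕ} (I : Finset (Fin n)) (x : EuclideanSpace ℝ (Fin n)) :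
    EuclideanSpace ℝ {i : Fin n // i ∈ I} :=
  (WithLp.equiv 2 ({i : Fin n // i ∈ I} → ℝ)).symm (fun i => x i.1)

/-- let `C` be nonempty closed convex, `v ∈ ri(C)`, and let `w` be such that
its projection `p` onto `C` is also its projection onto `aff(C)`.  If the subspace
`S_I = {q : q_I = 0}` is contained in the direction space `L` of `aff(C)`, then `wᵢ = pᵢ`
for `i ∉ I`, `dist(w, C) = ‖w − p‖ (= ‖w_I − p_I‖)`, and
`dist(Π_I w, Π_I C) ≤ ‖w − p‖`. -/
theorem stmt19 {n : ℕ} (C : Set (EuclideanSpace ℝ (Fin n)))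
    (hCne : C.Nonempty) (hCcl : IsClosed C) (hCcv : Convex ℝ C)
    (v : EuclideanSpace ℝ (Fin n)) (hv : v ∈ intrinsicInterior ℝ C)
    (I : Finset (Fin n))
    (hSI : ∀ q : EuclideanSpace ℝ (Fin n), (∀ i ∈ I, q i = 0) →
      q ∈ (affineSpan ℝ C).direction)
    (w p : EuclideanSpace ℝ (Fin n)) (hpC : p ∈ C)
    (hprojC : ∀ z ∈ C, ‖w - p‖ ≤ ‖w - z‖)
    (hprojAff : ∀ z ∈ (affineSpan ℝ C : Set (EuclideanSpace ℝ (Fin n))), ‖w - p‖ ≤ ‖w - z‖) :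
    (∀ i ∉ I, w i = p i) ∧
    Metric.infDist w C = ‖w - p‖ ∧
    ‖w - p‖ = Real.sqrt (∑ i ∈ I, (w i - p i) ^ 2) ∧
    Metric.infDist (coordProj I w) (coordProj I '' C) ≤ ‖w - p‖ := by
  have h1 : ∀ i ∉ I, w i = p i := by
    intro i hi
    set u : EuclideanSpace ℝ (Fin n) := w - p with hu
    set q : EuclideanSpace ℝ (Fin n) := EuclideanSpace.single i (u i) with hq
    have hq0 : ∀ j ∈ I, q j = 0 := by
      intro j hj
      have : j ≠ i := fun h => hi (h ▸ hj)
      simp [hq, EuclideanSpace.single_apply]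
      intro h; exact absurd h this
    have hmem : q + p ∈ (affineSpan ℝ C : Set (EuclideanSpace ℝ (Fin n))) :=
      AffineSubspace.vadd_mem_of_mem_direction (hSI q hq0)
        (subset_affineSpan ℝ C hpC)
    have hle : ‖u‖ ≤ ‖u - q‖ := by
      have := hprojAff (q + p) hmem
      have e : w - (q + p) = u - q := by
        simp [hu]; abel
      rwa [e] at this
    have hiq : ⟪u, q⟫ = u i * u i := by
      rw [hq, EuclideanSpace.inner_single_right]
      simp [mul_comm]
    have hnq : ‖q‖ ^ 2 = u i * u i := by
      have : ⟪q, q⟫ = u i * u i := by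
        rw [hq, EuclideanSpace.inner_single_right]
        simp [EuclideanSpace.single_apply]
      rw [← real_inner_self_eq_norm_sq, this]
    have hsq : ‖u - q‖ ^ 2 = ‖u‖ ^ 2 - u i * u i := by
      rw [norm_sub_sq_real, hiq, hnq]; ring
    have h2 : ‖u‖ ^ 2 ≤ ‖u - q‖ ^ 2 := by
      exact pow_le_pow_left₀ (norm_nonneg _) hle 2
    rw [hsq] at h2
    have : u i * u i ≤ 0 := by linarith
    have : u i = 0 := by nlinarith [mul_self_nonneg (u i)]
    have := this
    simpa [hu, sub_eq_zero] using this
  refine ⟨h1, ?_, ?_, ?_⟩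
  · apply le_antisymm
    · simpa [dist_eq_norm] using Metric.infDist_le_dist_of_mem hpC
    · haveI : Nonempty ↥C := hCne.to_subtype
      rw [Metric.infDist_eq_iInf]
      apply le_ciInf
      intro z
      simpa [dist_eq_norm] using hprojC z.1 z.2
  · have key : ‖w - p‖ = Real.sqrt (∑ i, ((w - p) i) ^ 2) := by
      rw [EuclideanSpace.norm_eq]
      congr 1
      apply Finset.sum_congr rfl
      intro i _
      rw [Real.norm_eq_abs, sq_abs]
    rw [key]
    congr 1
    rw [← Finset.sum_subset (Finset.subset_univ I)]
    · apply Finset.sum_congr rfl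
      intro i _
      simp [sub_eq_zero]
    · intro i _ hi
      have := h1 i hi
      simp [this, sub_eq_zero]
  · have hmem : coordProj I p ∈ coordProj I '' C := ⟨p, hpC, rfl⟩
    refine le_trans (Metric.infDist_le_dist_of_mem hmem) ?_
    rw [dist_eq_norm, EuclideanSpace.norm_eq]
    have hwp : ‖w - p‖ = Real.sqrt (∑ i ∈ I, (w i - p i) ^ 2) := by
      rw [EuclideanSpace.norm_eq]
      congr 1
      rw [← Finset.sum_subset (Finset.subset_univ I)]
      · apply Finset.sum_congr rfl; intro i _; rw [Real.norm_eq_abs, sq_abs]; simp [sub_eq_zero]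
      · intro i _ hi; simp [h1 i hi, sub_eq_zero]
    rw [hwp]
    apply Real.sqrt_le_sqrt
    have : ∀ j : {i : Fin n // i ∈ I},
        ‖(coordProj I w - coordProj I p) j‖ ^ 2 = (w j.1 - p j.1) ^ 2 := by
      intro j
      simp [coordProj, Real.norm_eq_abs, sq_abs]
    rw [Finset.sum_congr rfl (fun j _ => this j)]
    rw [← Finset.sum_coe_sort I (fun i => (w i - p i) ^ 2)]
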